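/- arXiv:1005.0270 — 4 statements merged into one kernel-verified Lean document; each statement's English description precedes it below -/
import Mathlib

section
/- Locality of 2-cocycles (Lemma 4.1): Let ω be a 2-cocycle on the Lie algebra 𝒮(ℝ, L). If ξ, η ∈ 𝒮(ℝ, L) have compact supports and their closed supports are disjoint (tsupport ξ ∩ tsupport η = ∅), then ω(ξ, η) = 0. -/
open SchwartzMap Complex Filter
open scoped FourierTransform ComplexInnerProductSpace

/-- Every Schwartz function has temperate growth. -/
theorem SchwartzMap.hasTemperateGrowth' {D F : Type*} [NormedAddCommGroup D] [NormedSpace ℝ D]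
    [NormedAddCommGroup F] [NormedSpace ℝ F] (f : 𝓢(D, F)) :
    Function.HasTemperateGrowth ⇑f := by
  refine ⟨f.smooth', fun n => ?_⟩
  obtain ⟨C, _, hC⟩ := f.decay 0 n
  exact ⟨0, C, fun x => by simpa using hC x⟩

/-- A complex Lie algebra structure (complex-bilinear skew bracket satisfying the Jacobi
identity) on a complex normed space `L`. -/
structure LieBracket (L : Type*) [NormedAddCommGroup L] [NormedSpace ℂ L] where
  br : L →ₗ[ℂ] L →ₗ[ℂ] L
  skew : ∀ x y, br x y = - br y x
  jacobi : ∀ x y z, br (br x y) z + br (br y z) x + br (br z x) y = 0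

variable {L : Type*} [NormedAddCommGroup L] [NormedSpace ℂ L] [FiniteDimensional ℂ L]

/-- Simplicity of a Lie algebra: non-abelian and without nontrivial ideals. -/
def LieBracket.IsSimple (B : LieBracket L) : Prop :=
  (∃ x y, B.br x y ≠ 0) ∧
    ∀ I : Submodule ℂ L, (∀ x : L, ∀ y ∈ I, B.br x y ∈ I) → I = ⊥ ∨ I = ⊤

/-- The Killing form `κ(x,y) = tr (ad x ∘ ad y)` of the Lie algebra `(L, B)`. -/
noncomputable def LieBracket.killing (B : LieBracket L) (x y : L) : ℂ :=
  LinearMap.trace ℂ L ((B.br x).comp (B.br y))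

/-- The bracket as a continuous real-bilinear map. -/
noncomputable def LieBracket.clm (B : LieBracket L) : L →L[ℝ] L →L[ℝ] L :=
  LinearMap.toContinuousLinearMap
  { toFun := fun x => LinearMap.toContinuousLinearMap ((B.br x).restrictScalars ℝ)
    map_add' := fun x y => by ext z; simp
    map_smul' := fun r x => by
      ext z
      simp only [RingHom.id_apply, ContinuousLinearMap.coe_smul', Pi.smul_apply,
        LinearMap.coe_toContinuousLinearMap', LinearMap.coe_restrictScalars]
      rw [← algebraMap_smul ℂ r x, _root_.map_smul]
      simp [algebraMap_smul] }

@[simp] lemma LieBracket.clm_apply (B : LieBracket L) (x y : L) : B.clm x y = B.br x y := rfl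

/-- The pointwise Lie bracket on the Schwartz space `𝓢(ℝ, L)`:
`(sbracket ξ η) t = [ξ t, η t]`. -/
noncomputable def LieBracket.sbracket (B : LieBracket L) (ξ η : 𝓢(ℝ, L)) : 𝓢(ℝ, L) :=
  SchwartzMap.bilinLeftCLM B.clm η.hasTemperateGrowth' ξ

@[simp] lemma LieBracket.sbracket_apply (B : LieBracket L) (ξ η : 𝓢(ℝ, L)) (t : ℝ) :
    B.sbracket ξ η t = B.br (ξ t) (η t) := rfl

/-! Simplicity gives `[L, L] = L`, so the identity of `L` is a finite sum `v ↦ ∑ᵢ [aᵢ, Pᵢ v]`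
with `Pᵢ` linear. For a bump function `χ` equal to `1` on `supp ξ` and `0` on `supp η`, this
writes `ξ = ∑ᵢ [χ aᵢ, Pᵢ ∘ ξ]`, where `η` commutes pointwise with both `χ aᵢ` and `Pᵢ ∘ ξ`; the
cocycle identity for `χ aᵢ, Pᵢ ∘ ξ, η` then kills each term `ω([χ aᵢ, Pᵢ ∘ ξ], η)`. -/

open Function Set

section Bilinear

variable {R M N P : Type*} [CommSemiring R] [AddCommMonoid M] [AddCommMonoid N]
  [AddCommMonoid P] [Module R M] [Module R N] [Module R P]

theorem LinearMap.exists_sum_eq_of_mem_span_range (f : M →ₗ[R] N →ₗ[R] P) {w : P}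
    (hw : w ∈ Submodule.span R (Set.range fun p : M × N => f p.1 p.2)) :
    ∃ (n : ℕ) (x : Fin n → M) (y : Fin n → N), ∑ i, f (x i) (y i) = w := by
  obtain ⟨n, c, g, rfl⟩ := Submodule.mem_span_set'.mp hw
  choose p hp using fun i => (g i).2
  exact ⟨n, fun i => (p i).1, fun i => c i • (p i).2, by simp [hp]⟩

theorem LinearMap.exists_sum_apply_eq_self [Module.Free R P] [Module.Finite R P]
    (f : M →ₗ[R] N →ₗ[R] P) (hf : Submodule.span R (Set.range fun p : M × N => f p.1 p.2) = ⊤) :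
    ∃ (n : ℕ) (a : Fin n → M) (Q : Fin n → P →ₗ[R] N), ∀ v, ∑ i, f (a i) (Q i v) = v := by
  let b := Module.Free.chooseBasis R P
  choose n x y hxy using fun j =>
    f.exists_sum_eq_of_mem_span_range (hf ▸ Submodule.mem_top (x := b j))
  let e := (Fintype.equivFin (Σ j, Fin (n j))).symm
  refine ⟨_, fun k => x (e k).1 (e k).2, fun k => (b.coord (e k).1).smulRight (y (e k).1 (e k).2),
    fun v => ?_⟩
  calc ∑ k, f (x (e k).1 (e k).2) (b.coord (e k).1 v • y (e k).1 (e k).2)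
      = ∑ q : Σ j, Fin (n j), f (x q.1 q.2) (b.coord q.1 v • y q.1 q.2) :=
        e.sum_comp fun q => f (x q.1 q.2) (b.coord q.1 v • y q.1 q.2)
    _ = ∑ j, b.coord j v • ∑ i, f (x j i) (y j i) := by
        rw [← Finset.univ_sigma_univ, Finset.sum_sigma]
        simp [Finset.smul_sum]
    _ = v := by simp only [hxy, Module.Basis.coord_apply]; exact b.sum_repr v

end Bilinear

open scoped ContDiff Manifold in
theorem exists_contDiff_hasCompactSupport_eqOn_zero_one {E : Type*} [NormedAddCommGroup E]
    [NormedSpace ℝ E] [FiniteDimensional ℝ E] {s t : Set E} (hs : IsClosed s) (ht : IsCompact t)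
    (hd : Disjoint s t) :
    ∃ χ : E → ℝ, ContDiff ℝ ∞ χ ∧ HasCompactSupport χ ∧ EqOn χ 0 s ∧ EqOn χ 1 t := by
  obtain ⟨r, hr⟩ := ht.isBounded.subset_closedBall 0
  have hd' : Disjoint (s ∪ (Metric.ball 0 (r + 1))ᶜ) t :=
    disjoint_union_left.2 ⟨hd, disjoint_compl_left_iff_subset.2
      (hr.trans (Metric.closedBall_subset_ball (lt_add_one r)))⟩
  obtain ⟨χ, hχ0, hχ1, -⟩ := exists_contMDiffMap_zero_one_of_isClosed (n := ⊤) 𝓘(ℝ, E)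
    (hs.union Metric.isOpen_ball.isClosed_compl) ht.isClosed hd'
  refine ⟨χ, contMDiff_iff_contDiff.1 χ.contMDiff, ?_, fun x hx => hχ0 (Or.inl hx), hχ1⟩
  exact HasCompactSupport.intro (isCompact_closedBall 0 (r + 1)) fun x hx =>
    hχ0 (Or.inr fun hxb => hx (Metric.ball_subset_closedBall hxb))

theorem LieBracket.span_range_br_eq_top {V : Type*} [NormedAddCommGroup V] [NormedSpace ℂ V]
    (B : LieBracket V) (hB : B.IsSimple) :
    Submodule.span ℂ (Set.range fun p : V × V => B.br p.1 p.2) = ⊤ := by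
  set S := Submodule.span ℂ (Set.range fun p : V × V => B.br p.1 p.2)
  have hbr_mem : ∀ x y, B.br x y ∈ S := fun x y => Submodule.subset_span ⟨(x, y), rfl⟩
  refine (hB.2 S fun x y _ => hbr_mem x y).resolve_left fun hbot => ?_
  obtain ⟨x, y, hxy⟩ := hB.1
  exact hxy (by simpa [hbot] using hbr_mem x y)

namespace LieBracket

variable (B : LieBracket L)

theorem sbracket_eq_zero_of_disjoint_support {ξ η : 𝓢(ℝ, L)}
    (h : Disjoint (support ξ) (support η)) : B.sbracket ξ η = 0 := by
  ext t
  by_cases hξ : ξ t = 0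
  · simp [hξ]
  · simp [notMem_support.1 (h.notMem_of_mem_left (mem_support.2 hξ))]

theorem exists_sum_sbracket_eq (hB : B.IsSimple) {ξ η : 𝓢(ℝ, L)} (hξ : HasCompactSupport ξ)
    (hd : Disjoint (tsupport ξ) (tsupport η)) :
    ∃ (n : ℕ) (α ζ : Fin n → 𝓢(ℝ, L)), ∑ i, B.sbracket (α i) (ζ i) = ξ ∧
      (∀ i, B.sbracket (ζ i) η = 0) ∧ ∀ i, B.sbracket η (α i) = 0 := by
  obtain ⟨n, a, P, hP⟩ := B.br.exists_sum_apply_eq_self (B.span_range_br_eq_top hB)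
  obtain ⟨χ, hχ, hχc, hχ0, hχ1⟩ :=
    exists_contDiff_hasCompactSupport_eqOn_zero_one (isClosed_tsupport η) hξ hd.symm
  let α i : 𝓢(ℝ, L) := (hχc.smul_right (f' := fun _ => a i)).toSchwartzMap (hχ.smul contDiff_const)
  let ζ i : 𝓢(ℝ, L) := SchwartzMap.postcompCLM (P i).toContinuousLinearMap ξ
  refine ⟨n, α, ζ, ?_, fun i => B.sbracket_eq_zero_of_disjoint_support ?_,
    fun i => B.sbracket_eq_zero_of_disjoint_support ?_⟩
  · ext t
    have hχξ : χ t • ξ t = ξ t := by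
      by_cases hξt : ξ t = 0
      · simp [hξt]
      · simp [hχ1 (subset_tsupport _ (mem_support.2 hξt))]
    simp [α, ζ, sum_apply, ← Finset.smul_sum, hP, hχξ]
  · have hζξ : support (ζ i) ⊆ support ξ := fun t ht hξt => ht (by simp [ζ, hξt])
    exact hd.mono (hζξ.trans (subset_tsupport _)) (subset_tsupport _)
  · have hαχ : support (α i) ⊆ support χ := support_smul_subset_left _ _
    exact (disjoint_support_iff.2 hχ0).mono (subset_tsupport _) hαχ

theorem cocycle_sbracket_eq_zero (ω : 𝓢(ℝ, L) →ₗ[ℂ] 𝓢(ℝ, L) →ₗ[ℂ] ℂ)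
    (hjacobi : ∀ ξ η ζ,
      ω (B.sbracket ξ η) ζ + ω (B.sbracket η ζ) ξ + ω (B.sbracket ζ ξ) η = 0)
    {α ζ η : 𝓢(ℝ, L)} (hζ : B.sbracket ζ η = 0) (hα : B.sbracket η α = 0) :
    ω (B.sbracket α ζ) η = 0 := by
  simpa [hζ, hα] using hjacobi α ζ η

end LieBracket

theorem cocycle_isLocal_general (B : LieBracket L) (hB : B.IsSimple)
    (ω : 𝓢(ℝ, L) →ₗ[ℂ] 𝓢(ℝ, L) →ₗ[ℂ] ℂ)
    (hjacobi : ∀ ξ η ζ,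
      ω (B.sbracket ξ η) ζ + ω (B.sbracket η ζ) ξ + ω (B.sbracket ζ ξ) η = 0)
    (ξ η : 𝓢(ℝ, L)) (hcξ : HasCompactSupport ⇑ξ)
    (hdisj : tsupport ⇑ξ ∩ tsupport ⇑η = ∅) :
    ω ξ η = 0 := by
  obtain ⟨n, α, ζ, hsum, hζ, hα⟩ :=
    B.exists_sum_sbracket_eq hB hcξ (disjoint_iff_inter_eq_empty.2 hdisj)
  rw [← hsum, map_sum, LinearMap.sum_apply]
  exact Finset.sum_eq_zero fun i _ => B.cocycle_sbracket_eq_zero ω hjacobi (hζ i) (hα i)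

/-- **Lemma 4.1** (locality of 2-cocycles): any 2-cocycle `ω` on `𝒮(ℝ, L)` vanishes on pairs
of compactly supported elements with disjoint (closed) supports. -/
theorem cocycle_isLocal (B : LieBracket L) (hB : B.IsSimple)
    (ω : 𝓢(ℝ, L) →ₗ[ℂ] 𝓢(ℝ, L) →ₗ[ℂ] ℂ)
    (hskew : ∀ ξ η, ω ξ η = - ω η ξ)
    (hjacobi : ∀ ξ η ζ,
      ω (B.sbracket ξ η) ζ + ω (B.sbracket η ζ) ξ + ω (B.sbracket ζ ξ) η = 0)
    (ξ η : 𝓢(ℝ, L)) (hcξ : HasCompactSupport ⇑ξ) (hcη : HasCompactSupport ⇑η)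
    (hdisj : tsupport ⇑ξ ∩ tsupport ⇑η = ∅) :
    ω ξ η = 0 :=
  cocycle_isLocal_general B hB ω hjacobi ξ η hcξ hdisj
end

section
/- Locality of Jacobi bilinear forms on Schwartz functions (claim proved inside Theorem 4.3): Let γ : 𝒮(ℝ, ℂ) × 𝒮(ℝ, ℂ) → ℂ be a bilinear map satisfying γ(fg, h) + γ(gh, f) + γ(hf, g) = 0 for all f, g, h ∈ 𝒮(ℝ, ℂ), where fg denotes the pointwise product. If f and g have compact supports and their closed supports are disjoint, then γ(f, g) = 0. -/
open SchwartzMap Complex Filter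
open scoped FourierTransform ComplexInnerProductSpace

/-- The pointwise product on `𝓢(ℝ, ℂ)`. -/
noncomputable def mulS (f g : 𝓢(ℝ, ℂ)) : 𝓢(ℝ, ℂ) :=
  SchwartzMap.bilinLeftCLM (ContinuousLinearMap.mul ℝ ℂ) g.hasTemperateGrowth' f

@[simp] lemma mulS_apply (f g : 𝓢(ℝ, ℂ)) (t : ℝ) : mulS f g t = f t * g t := rfl

/-!
Since `supp f` is compact, there is a Schwartz cutoff `φ` equal to `1` on `supp f` and to `0` on
`supp g`. Then `φ f = f`, `f g = 0` and `g φ = 0`, so the Jacobi identity for the triple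
`(φ, f, g)` collapses to `γ(f, g) = 0`.
-/

open Set Function
open scoped ContDiff Manifold

theorem exists_contDiff_hasCompactSupport_eqOn_one_eqOn_zero {E : Type*}
    [NormedAddCommGroup E] [NormedSpace ℝ E] [FiniteDimensional ℝ E] {K C : Set E}
    (hK : IsCompact K) (hC : IsClosed C) (hKC : Disjoint K C) :
    ∃ φ : E → ℝ, ContDiff ℝ ∞ φ ∧ HasCompactSupport φ ∧ EqOn φ 1 K ∧ EqOn φ 0 C := by
  obtain ⟨L, hL, hKL⟩ := exists_compact_superset hK
  have hclosed : IsClosed (C ∪ (interior L)ᶜ) := hC.union isOpen_interior.isClosed_compl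
  have hdisj : Disjoint (C ∪ (interior L)ᶜ) K :=
    disjoint_union_left.2 ⟨hKC.symm, disjoint_compl_left_iff_subset.2 hKL⟩
  obtain ⟨φ, hφ0, hφ1, -⟩ :=
    exists_contMDiffMap_zero_one_of_isClosed 𝓘(ℝ, E) (n := ⊤) hclosed hK.isClosed hdisj
  refine ⟨φ, contMDiff_iff_contDiff.1 φ.contMDiff, ?_, hφ1, fun x hx ↦ hφ0 (.inl hx)⟩
  exact HasCompactSupport.intro hL fun x hx ↦ hφ0 (.inr fun hx' ↦ hx (interior_subset hx'))

theorem exists_schwartzMap_eqOn_one_eqOn_zero {E : Type*}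
    [NormedAddCommGroup E] [NormedSpace ℝ E] [FiniteDimensional ℝ E] {K C : Set E}
    (hK : IsCompact K) (hC : IsClosed C) (hKC : Disjoint K C) :
    ∃ φ : 𝓢(E, ℂ), EqOn φ 1 K ∧ EqOn φ 0 C := by
  obtain ⟨φ, hφ, hφc, hφ1, hφ0⟩ := exists_contDiff_hasCompactSupport_eqOn_one_eqOn_zero hK hC hKC
  refine ⟨(hφc.comp_left Complex.ofReal_zero).toSchwartzMap
    (Complex.ofRealCLM.contDiff.comp hφ), fun x hx ↦ ?_, fun x hx ↦ ?_⟩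
  · change (φ x : ℂ) = 1
    simp [hφ1 hx]
  · change (φ x : ℂ) = 0
    simp [hφ0 hx]

theorem mulS_eq_self_of_eqOn_one {φ f : 𝓢(ℝ, ℂ)} (h : EqOn φ 1 (tsupport f)) :
    mulS φ f = f := by
  ext x
  by_cases hx : f x = 0
  · simp [hx]
  · simp [h (subset_tsupport f hx)]

theorem mulS_eq_zero_of_eqOn_zero {f g : 𝓢(ℝ, ℂ)} (h : EqOn g 0 (support f)) :
    mulS f g = 0 := by
  ext x
  by_cases hx : f x = 0
  · simp [hx]
  · simp [h hx]

theorem jacobi_form_isLocal_general (γ : 𝓢(ℝ, ℂ) →ₗ[ℂ] 𝓢(ℝ, ℂ) →ₗ[ℂ] ℂ)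
    (hjacobi : ∀ f g h : 𝓢(ℝ, ℂ), γ (mulS f g) h + γ (mulS g h) f + γ (mulS h f) g = 0)
    (f g : 𝓢(ℝ, ℂ)) (hcf : HasCompactSupport ⇑f)
    (hdisj : tsupport ⇑f ∩ tsupport ⇑g = ∅) :
    γ f g = 0 := by
  have hdisj' : Disjoint (tsupport f) (tsupport g) := disjoint_iff_inter_eq_empty.2 hdisj
  obtain ⟨φ, hφ1, hφ0⟩ :=
    exists_schwartzMap_eqOn_one_eqOn_zero hcf.isCompact (isClosed_tsupport g) hdisj'
  have hφf : mulS φ f = f := mulS_eq_self_of_eqOn_one hφ1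
  have hfg : mulS f g = 0 := mulS_eq_zero_of_eqOn_zero fun x hx ↦
    image_eq_zero_of_notMem_tsupport (hdisj'.notMem_of_mem_left (subset_tsupport f hx))
  have hgφ : mulS g φ = 0 := mulS_eq_zero_of_eqOn_zero fun x hx ↦ hφ0 (subset_tsupport g hx)
  simpa [hφf, hfg, hgφ] using hjacobi φ f g

/-- **Locality of Jacobi bilinear forms** (claim inside Theorem 4.3): a bilinear form `γ` on
`𝒮(ℝ, ℂ)` satisfying `γ(fg,h) + γ(gh,f) + γ(hf,g) = 0` vanishes on pairs of compactly
supported functions with disjoint (closed) supports. -/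
theorem jacobi_form_isLocal (γ : 𝓢(ℝ, ℂ) →ₗ[ℂ] 𝓢(ℝ, ℂ) →ₗ[ℂ] ℂ)
    (hjacobi : ∀ f g h : 𝓢(ℝ, ℂ), γ (mulS f g) h + γ (mulS g h) f + γ (mulS h f) g = 0)
    (f g : 𝓢(ℝ, ℂ)) (hcf : HasCompactSupport ⇑f) (hcg : HasCompactSupport ⇑g)
    (hdisj : tsupport ⇑f ∩ tsupport ⇑g = ∅) :
    γ f g = 0 :=
  jacobi_form_isLocal_general γ hjacobi f g hcf hdisj
end

section
/- Lemma 5.5 (smooth convergence of commutators): Let (ξ_n) be a sequence in 𝒮(ℝ, L) such that: (i) the Fourier transforms ξ̂_n all have support contained in a fixed compact set; (ii) there is M > 0 with ‖ξ̂_n(p)‖ ≤ M for all n and all p ∈ ℝ; (iii) ξ̂_n converges pointwise to a bounded function; and (iv) the Lebesgue measure of the support of ξ̂_m − ξ̂_n tends to 0 as min(m,n) → ∞. Then for every η ∈ 𝒮(ℝ, L), the sequence of brackets [ξ_n, η] converges in the Schwartz topology to an element of 𝒮(ℝ, L). -/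
/-!
Since `K ⊆ [-R, R]` and the `ξ̂ₙ` are bounded by `M`, dominated convergence gives
`ξ̂ₙ → φ` in `L¹`. For `g ∈ L¹` supported in `[-R, R]`, differentiating under the integral gives
`‖Dⁱ (𝓕⁻ g)‖_∞ ≤ (2πR)ⁱ ‖g‖₁`; hence `ψ := 𝓕⁻ φ` is smooth with bounded derivatives and
`ξₙ = 𝓕⁻ ξ̂ₙ → ψ` uniformly with all derivatives. The Leibniz rule then bounds every Schwartz
seminorm of `[ξₙ, η] - [ψ, η]` by a constant times `‖ξ̂ₙ - φ‖₁`, so `[ξₙ, η] → [ψ, η]`.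
-/

open SchwartzMap Complex Filter
open scoped FourierTransform ComplexInnerProductSpace

variable {L : Type*} [NormedAddCommGroup L] [NormedSpace ℂ L] [FiniteDimensional ℂ L]

open MeasureTheory
open scoped Real

namespace Real

open scoped ContDiff

variable {V : Type*} [NormedAddCommGroup V] {g : ℝ → V} {R : ℝ}

theorem pow_abs_mul_norm_le_of_support_subset
    (hsupp : Function.support g ⊆ Metric.closedBall 0 R) (n : ℕ) (p : ℝ) :
    |p| ^ n * ‖g p‖ ≤ R ^ n * ‖g p‖ := by
  by_cases hp : g p = 0
  · simp [hp]
  · have : |p| ≤ R := by simpa using hsupp hp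
    gcongr

variable [NormedSpace ℂ V]

theorem fourierInv_sub {W : Type*} [NormedAddCommGroup W] [InnerProductSpace ℝ W]
    [MeasurableSpace W] [BorelSpace W] [FiniteDimensional ℝ W] {f h : W → V}
    (hf : Integrable f) (hh : Integrable h) : 𝓕⁻ (f - h) = 𝓕⁻ f - 𝓕⁻ h := by
  have hconv {u : W → V} (hu : Integrable u) (w : W) :
      Integrable fun v => 𝐞 (inner ℝ v w) • u v := by
    simpa [inner_neg_right] using (fourierIntegral_convergent_iff (-w)).2 hu
  ext w
  simp only [fourierInv_eq, Pi.sub_apply, smul_sub]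
  exact integral_sub (hconv hf w) (hconv hh w)

theorem integrable_pow_smul_of_support_subset (hg : Integrable g)
    (hsupp : Function.support g ⊆ Metric.closedBall 0 R) (n : ℕ) :
    Integrable fun p => p ^ n • g p :=
  (hg.norm.const_mul (R ^ n)).mono' ((continuous_pow n).aestronglyMeasurable.smul hg.1)
    (ae_of_all _ fun p => by
      simpa [norm_smul] using pow_abs_mul_norm_le_of_support_subset hsupp n p)

theorem contDiff_fourier_of_support_subset (hg : Integrable g)
    (hsupp : Function.support g ⊆ Metric.closedBall 0 R) : ContDiff ℝ ∞ (𝓕 g) :=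
  contDiff_fourier fun n _ => by
    simpa [norm_smul] using (integrable_pow_smul_of_support_subset hg hsupp n).norm

theorem norm_iteratedDeriv_fourier_le (hg : Integrable g)
    (hsupp : Function.support g ⊆ Metric.closedBall 0 R) (n : ℕ) (w : ℝ) :
    ‖iteratedDeriv n (𝓕 g) w‖ ≤ (2 * π * R) ^ n * ∫ p, ‖g p‖ := by
  rw [iteratedDeriv_fourier (N := n) (fun k _ => integrable_pow_smul_of_support_subset hg hsupp k)
    le_rfl, ← integral_const_mul]
  refine (VectorFourier.norm_fourierIntegral_le_integral_norm _ _ _ _ _).trans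
    (integral_mono_of_nonneg (ae_of_all _ fun _ => norm_nonneg _) (hg.norm.const_mul _)
      (ae_of_all _ fun p => ?_))
  calc ‖(-2 * π * I * p) ^ n • g p‖ = (2 * π) ^ n * (|p| ^ n * ‖g p‖) := by
        simp [norm_smul, mul_pow, abs_of_pos pi_pos, mul_assoc]
    _ ≤ (2 * π) ^ n * (R ^ n * ‖g p‖) :=
        mul_le_mul_of_nonneg_left (pow_abs_mul_norm_le_of_support_subset hsupp n p)
          (by positivity)
    _ = (2 * π * R) ^ n * ‖g p‖ := by ring

theorem norm_iteratedFDeriv_fourierInv_le (hg : Integrable g)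
    (hsupp : Function.support g ⊆ Metric.closedBall 0 R) (n : ℕ) (t : ℝ) :
    ‖iteratedFDeriv ℝ n (𝓕⁻ g) t‖ ≤ (2 * π * R) ^ n * ∫ p, ‖g p‖ := by
  rw [norm_iteratedFDeriv_eq_norm_iteratedDeriv, funext (fourierInv_eq_fourier_neg g),
    iteratedDeriv_comp_neg, norm_smul]
  simpa using norm_iteratedDeriv_fourier_le hg hsupp n (-t)

theorem hasTemperateGrowth_fourierInv (hg : Integrable g)
    (hsupp : Function.support g ⊆ Metric.closedBall 0 R) : (𝓕⁻ g).HasTemperateGrowth := by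
  refine ⟨?_, fun n => ⟨0, (2 * π * R) ^ n * ∫ p, ‖g p‖, fun t => ?_⟩⟩
  · rw [funext (fourierInv_eq_fourier_neg g)]
    exact (contDiff_fourier_of_support_subset hg hsupp).comp contDiff_neg
  · simpa using norm_iteratedFDeriv_fourierInv_le hg hsupp n t

end Real

section DominatedConvergence

open scoped Topology ENNReal

variable {α V : Type*} [NormedAddCommGroup V] {K : Set α} {M : ℝ}

theorem Function.support_subset_of_tendsto {ι β : Type*} [Zero β] [TopologicalSpace β]
    [T2Space β] {l : Filter ι} [l.NeBot] {F : ι → α → β} {φ : α → β}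
    (hsupp : ∀ i, Function.support (F i) ⊆ K)
    (hconv : ∀ p, Tendsto (fun i => F i p) l (𝓝 (φ p))) : Function.support φ ⊆ K := by
  intro p hp
  by_contra hpK
  have hzero : ∀ i, F i p = 0 := fun i => Function.notMem_support.1 fun h => hpK (hsupp i h)
  exact hp (tendsto_nhds_unique (hconv p) (by simp only [hzero]; exact tendsto_const_nhds))

theorem norm_le_indicator_of_support_subset {g : α → V} (hsupp : Function.support g ⊆ K)
    (hbd : ∀ p, ‖g p‖ ≤ M) (p : α) : ‖g p‖ ≤ K.indicator (fun _ => M) p := by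
  by_cases hp : p ∈ K
  · simpa [hp] using hbd p
  · simp [hp, Function.notMem_support.1 fun h => hp (hsupp h)]

variable [MeasurableSpace α] {μ : Measure α} {F : ℕ → α → V} {φ : α → V}

theorem integrable_of_tendsto_of_support_subset (hK : MeasurableSet K) (hKμ : μ K ≠ ∞)
    (hF : ∀ n, AEStronglyMeasurable (F n) μ) (hsupp : ∀ n, Function.support (F n) ⊆ K)
    (hbd : ∀ n p, ‖F n p‖ ≤ M) (hconv : ∀ p, Tendsto (fun n => F n p) atTop (𝓝 (φ p))) :
    Integrable φ μ :=
  ((integrable_indicator_iff hK).2 (integrableOn_const hKμ)).mono'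
    (aestronglyMeasurable_of_tendsto_ae _ hF (ae_of_all _ hconv))
    (ae_of_all _ (norm_le_indicator_of_support_subset
      (Function.support_subset_of_tendsto hsupp hconv)
      fun p => le_of_tendsto' (hconv p).norm fun n => hbd n p))

theorem tendsto_integral_norm_sub_of_tendsto_of_support_subset (hK : MeasurableSet K)
    (hKμ : μ K ≠ ∞) (hF : ∀ n, AEStronglyMeasurable (F n) μ)
    (hsupp : ∀ n, Function.support (F n) ⊆ K) (hbd : ∀ n p, ‖F n p‖ ≤ M)
    (hconv : ∀ p, Tendsto (fun n => F n p) atTop (𝓝 (φ p))) :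
    Tendsto (fun n => ∫ p, ‖F n p - φ p‖ ∂μ) atTop (𝓝 0) := by
  have hφ := (integrable_of_tendsto_of_support_subset hK hKμ hF hsupp hbd hconv).1
  have hlint := tendsto_lintegral_norm_of_dominated_convergence hF
    ((integrable_indicator_iff hK).2 (integrableOn_const hKμ)).2
    (fun n => ae_of_all _ (norm_le_indicator_of_support_subset (hsupp n) (hbd n)))
    (ae_of_all _ hconv)
  have heq : ∀ n, ∫ p, ‖F n p - φ p‖ ∂μ = (∫⁻ p, ENNReal.ofReal ‖F n p - φ p‖ ∂μ).toReal :=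
    fun n => integral_eq_lintegral_of_nonneg_ae (ae_of_all _ fun _ => norm_nonneg _)
      ((hF n).sub hφ).norm
  simp only [heq]
  exact (ENNReal.tendsto_toReal ENNReal.zero_ne_top).comp hlint

end DominatedConvergence

namespace SchwartzMap

open scoped Topology

variable {D E F G : Type*} [NormedAddCommGroup D] [NormedSpace ℝ D] [NormedAddCommGroup E]
  [NormedSpace ℝ E] [NormedAddCommGroup F] [NormedSpace ℝ F] [NormedAddCommGroup G]
  [NormedSpace ℝ G]

theorem seminorm_bilinLeftCLM_le (B : E →L[ℝ] F →L[ℝ] G) {g : D → F}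
    (hg : g.HasTemperateGrowth) {A : ℕ → ℝ} (hA : ∀ i x, ‖iteratedFDeriv ℝ i g x‖ ≤ A i)
    (f : 𝓢(D, E)) (k l : ℕ) :
    SchwartzMap.seminorm ℝ k l (bilinLeftCLM B hg f) ≤
      ‖B‖ * ∑ i ∈ Finset.range (l + 1), l.choose i * SchwartzMap.seminorm ℝ k i f * A (l - i) := by
  have hA0 : ∀ i, 0 ≤ A i := fun i => (norm_nonneg _).trans (hA i 0)
  refine seminorm_le_bound ℝ k l _
    (mul_nonneg (by positivity) (Finset.sum_nonneg fun i _ => by have := hA0 (l - i); positivity))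
    fun x => ?_
  calc ‖x‖ ^ k * ‖iteratedFDeriv ℝ l (fun t => B (f t) (g t)) x‖
      ≤ ‖x‖ ^ k * (‖B‖ * ∑ i ∈ Finset.range (l + 1), l.choose i *
          ‖iteratedFDeriv ℝ i f x‖ * ‖iteratedFDeriv ℝ (l - i) g x‖) := by
        gcongr
        exact B.norm_iteratedFDeriv_le_of_bilinear (f.smooth ⊤) hg.1 x (mod_cast le_top)
    _ = ‖B‖ * ∑ i ∈ Finset.range (l + 1), l.choose i *
          (‖x‖ ^ k * ‖iteratedFDeriv ℝ i f x‖) * ‖iteratedFDeriv ℝ (l - i) g x‖ := by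
        rw [Finset.mul_sum, Finset.mul_sum, Finset.mul_sum]
        exact Finset.sum_congr rfl fun i _ => by ring
    _ ≤ _ := by
        gcongr with i
        · exact le_seminorm ℝ k i f x
        · exact hA (l - i) x

theorem tendsto_bilinLeftCLM_zero (B : E →L[ℝ] F →L[ℝ] G) {g : ℕ → D → F}
    (hg : ∀ n, (g n).HasTemperateGrowth) {A a : ℕ → ℝ}
    (hbound : ∀ n i x, ‖iteratedFDeriv ℝ i (g n) x‖ ≤ A i * a n)
    (ha : Tendsto a atTop (𝓝 0)) (f : 𝓢(D, E)) :
    Tendsto (fun n => bilinLeftCLM B (hg n) f) atTop (𝓝 0) := by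
  rw [(schwartz_withSeminorms ℝ D G).tendsto_nhds _ 0]
  rintro ⟨k, l⟩ ε hε
  have hlim : Tendsto (fun n => ‖B‖ * ∑ i ∈ Finset.range (l + 1),
      l.choose i * SchwartzMap.seminorm ℝ k i f * (A (l - i) * a n)) atTop (𝓝 0) := by
    simpa using (tendsto_finsetSum _ fun i _ => (ha.const_mul (A (l - i))).const_mul
      (l.choose i * SchwartzMap.seminorm ℝ k i f)).const_mul ‖B‖
  filter_upwards [hlim.eventually (gt_mem_nhds hε)] with n hn
  simpa using (seminorm_bilinLeftCLM_le B (hg n) (hbound n) f k l).trans_lt hn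

end SchwartzMap

theorem commutator_tendsto_general (B : LieBracket L)
    (ξ : ℕ → 𝓢(ℝ, L)) (K : Set ℝ) (hK : IsCompact K)
    (hsupp : ∀ n, Function.support (𝓕 ⇑(ξ n)) ⊆ K)
    (M : ℝ) (hbd : ∀ (n : ℕ) (p : ℝ), ‖𝓕 ⇑(ξ n) p‖ ≤ M)
    (φ : ℝ → L)
    (hconv : ∀ p, Tendsto (fun n => 𝓕 ⇑(ξ n) p) atTop (nhds (φ p)))
    (η : 𝓢(ℝ, L)) :
    ∃ ζ : 𝓢(ℝ, L), Tendsto (fun n => B.sbracket (ξ n) η) atTop (nhds ζ) := by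
  have : CompleteSpace L := FiniteDimensional.complete ℂ L
  obtain ⟨R, hKR⟩ := hK.isBounded.subset_closedBall 0
  have hF (n : ℕ) : Integrable (𝓕 ⇑(ξ n)) := (𝓕 (ξ n)).integrable
  have hφ : Integrable φ := integrable_of_tendsto_of_support_subset hK.measurableSet
    hK.measure_lt_top.ne (fun n => (hF n).1) hsupp hbd hconv
  have hφR : Function.support φ ⊆ Metric.closedBall 0 R :=
    (Function.support_subset_of_tendsto hsupp hconv).trans hKR
  have hgR (n : ℕ) : Function.support (𝓕 ⇑(ξ n) - φ) ⊆ Metric.closedBall 0 R :=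
    (Function.support_sub _ _).trans (Set.union_subset ((hsupp n).trans hKR) hφR)
  have hψ := Real.hasTemperateGrowth_fourierInv hφ hφR
  have hdiff (n : ℕ) : B.sbracket (ξ n) η - bilinLeftCLM B.clm.flip hψ η =
      bilinLeftCLM B.clm.flip (Real.hasTemperateGrowth_fourierInv ((hF n).sub hφ) (hgR n)) η := by
    ext t
    simp [Real.fourierInv_sub (hF n) hφ,
      (ξ n).continuous.fourierInv_fourier_eq (ξ n).integrable (hF n)]
  refine ⟨bilinLeftCLM B.clm.flip hψ η, tendsto_sub_nhds_zero_iff.1 ?_⟩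
  simp_rw [hdiff]
  exact SchwartzMap.tendsto_bilinLeftCLM_zero _ _
    (fun n => Real.norm_iteratedFDeriv_fourierInv_le ((hF n).sub hφ) (hgR n))
    (tendsto_integral_norm_sub_of_tendsto_of_support_subset hK.measurableSet
      hK.measure_lt_top.ne (fun n => (hF n).1) hsupp hbd hconv) η

/-- **Lemma 5.5** (smooth convergence of commutators). -/
theorem commutator_tendsto (B : LieBracket L) (hB : B.IsSimple)
    (ξ : ℕ → 𝓢(ℝ, L)) (K : Set ℝ) (hK : IsCompact K)
    (hsupp : ∀ n, Function.support (𝓕 ⇑(ξ n)) ⊆ K)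
    (M : ℝ) (hM : 0 < M) (hbd : ∀ (n : ℕ) (p : ℝ), ‖𝓕 ⇑(ξ n) p‖ ≤ M)
    (φ : ℝ → L) (C : ℝ) (hφbd : ∀ p, ‖φ p‖ ≤ C)
    (hconv : ∀ p, Tendsto (fun n => 𝓕 ⇑(ξ n) p) atTop (nhds (φ p)))
    (hmeas : ∀ ε : ENNReal, 0 < ε → ∃ N : ℕ, ∀ m n : ℕ, N ≤ m → N ≤ n →
      MeasureTheory.volume (Function.support fun p => 𝓕 ⇑(ξ m) p - 𝓕 ⇑(ξ n) p) < ε)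
    (η : 𝓢(ℝ, L)) :
    ∃ ζ : 𝓢(ℝ, L), Tendsto (fun n => B.sbracket (ξ n) η) atTop (nhds ζ) :=
  commutator_tendsto_general B ξ K hK hsupp M hbd φ hconv η
end

section
/- Schwartz convergence of truncated Fourier series (claim proved inside Lemma 5.2): Let S > 0, let u ∈ 𝒮(ℝ, ℂ) be smooth with compact support contained in the open interval (−S/2, S/2), and let g ∈ C^∞(ℝ, ℂ) have compact support contained in [−S/2, S/2] with g(p) = 1 for all p in the support of u. Define the Fourier coefficients g_k := (1/S) ∫_{−S/2}^{S/2} g(p) e^{−2πikp/S} dp for k ∈ ℤ. Then the partial sums Σ_{|k| ≤ N} g_k · (p ↦ e^{2πikp/S} u(p)) converge to u in the Schwartz topology of 𝒮(ℝ, ℂ) as N → ∞. -/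
open SchwartzMap Complex Filter
open scoped ContDiff Real Topology

/-!
Write `g` as the sum of its Fourier series on `[-S/2, S/2]`. Since `g` is smooth and vanishes to
infinite order at `±S/2`, the coefficients of `g⁽ʲ⁾` are `(2πik/S)ʲ ĝₖ`; these decay like `k⁻²`
because those of `g⁽ʲ⁺²⁾` are bounded, so every derived series converges uniformly on the
circle. Hence the partial sums `ψ_N` converge to `g` together with all derivatives, uniformly on
`supp u`. As `g u = u`, the `N`-th partial sum minus `u` is `(ψ_N - g) u`, and the Leibniz rule
bounds each Schwartz seminorm of this product by sup-norms of finitely many derivatives of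
`ψ_N - g` on `supp u` times Schwartz seminorms of `u`.
-/

section Multiplier

variable {E : Type*} [NormedAddCommGroup E] [NormedSpace ℝ E]

theorem SchwartzMap.seminorm_le_of_forall_eq_mul {u f : 𝓢(E, ℂ)} {φ : E → ℂ}
    (hφ : ContDiff ℝ ∞ φ) (hf : ∀ x, f x = φ x * u x) (m n : ℕ) {ε : ℝ} (hε : 0 ≤ ε)
    (hφε : ∀ i ≤ n, ∀ x ∈ tsupport u, ‖iteratedFDeriv ℝ i φ x‖ ≤ ε) :
    SchwartzMap.seminorm ℝ m n f ≤
      2 ^ n * ε * ∑ j ∈ Finset.range (n + 1), SchwartzMap.seminorm ℝ m j u := by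
  set C := ∑ j ∈ Finset.range (n + 1), SchwartzMap.seminorm ℝ m j u
  have hC : 0 ≤ C := Finset.sum_nonneg fun j _ => apply_nonneg _ _
  refine seminorm_le_bound ℝ m n f (by positivity) fun x => ?_
  have hterm : ∀ i ∈ Finset.range (n + 1), ‖x‖ ^ m * ((n.choose i : ℝ) *
      ‖iteratedFDeriv ℝ i φ x‖ * ‖iteratedFDeriv ℝ (n - i) u x‖) ≤ n.choose i * (ε * C) := by
    intro i hi
    by_cases hx : x ∈ tsupport u
    · have hu : ‖x‖ ^ m * ‖iteratedFDeriv ℝ (n - i) u x‖ ≤ C :=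
        (le_seminorm ℝ m (n - i) u x).trans (Finset.single_le_sum
          (fun j _ => apply_nonneg _ _) (Finset.mem_range.2 (by omega)))
      calc _ = n.choose i * (‖iteratedFDeriv ℝ i φ x‖ *
              (‖x‖ ^ m * ‖iteratedFDeriv ℝ (n - i) u x‖)) := by ring
        _ ≤ _ := by
          gcongr
          exact hφε i (Nat.lt_succ_iff.1 (Finset.mem_range.1 hi)) x hx
    · rw [image_eq_zero_of_notMem_tsupport (mt (tsupport_iteratedFDeriv_subset _ ·) hx)]
      simp only [norm_zero, mul_zero]
      positivity
  calc ‖x‖ ^ m * ‖iteratedFDeriv ℝ n f x‖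
      ≤ ‖x‖ ^ m * ∑ i ∈ Finset.range (n + 1), (n.choose i : ℝ) * ‖iteratedFDeriv ℝ i φ x‖ *
          ‖iteratedFDeriv ℝ (n - i) u x‖ := by
        rw [show ⇑f = fun y => φ y * u y from funext hf]
        gcongr
        exact norm_iteratedFDeriv_mul_le hφ (u.smooth ⊤) x (by exact_mod_cast le_top)
    _ ≤ ∑ i ∈ Finset.range (n + 1), n.choose i * (ε * C) := by
        rw [Finset.mul_sum]
        exact Finset.sum_le_sum hterm
    _ = 2 ^ n * ε * C := by
        rw [← Finset.sum_mul, ← Nat.cast_sum, Nat.sum_range_choose]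
        push_cast
        ring

theorem SchwartzMap.tendsto_of_forall_eq_mul {ι : Type*} {l : Filter ι} {u v : 𝓢(E, ℂ)}
    {f : ι → 𝓢(E, ℂ)} {φ : ι → E → ℂ} {ψ : E → ℂ} (hφ : ∀ N, ContDiff ℝ ∞ (φ N))
    (hψ : ContDiff ℝ ∞ ψ) (hf : ∀ N x, f N x = φ N x * u x) (hv : ∀ x, v x = ψ x * u x)
    (hlim : ∀ i, TendstoUniformlyOn (fun N => iteratedFDeriv ℝ i (φ N))
      (iteratedFDeriv ℝ i ψ) l (tsupport u)) :
    Tendsto f l (𝓝 v) := by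
  rw [(schwartz_withSeminorms ℝ E ℂ).tendsto_nhds]
  rintro ⟨m, n⟩ ε hε
  set C := ∑ j ∈ Finset.range (n + 1), SchwartzMap.seminorm ℝ m j u
  have hC : 0 ≤ C := Finset.sum_nonneg fun j _ => apply_nonneg _ _
  set δ := ε / (2 ^ n * (C + 1))
  have hδ : 0 < δ := by positivity
  have hclose : ∀ᶠ N in l, ∀ i ∈ Finset.range (n + 1), ∀ x ∈ tsupport u,
      dist (iteratedFDeriv ℝ i ψ x) (iteratedFDeriv ℝ i (φ N) x) < δ :=
    (Finset.eventually_all _).2 fun i _ => Metric.tendstoUniformlyOn_iff.1 (hlim i) δ hδ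
  filter_upwards [hclose] with N hN
  calc SchwartzMap.seminorm ℝ m n (f N - v) ≤ 2 ^ n * δ * C := by
        refine seminorm_le_of_forall_eq_mul ((hφ N).sub hψ) (fun x => ?_) m n hδ.le
          fun i hi x hx => ?_
        · simp only [sub_apply, hf, hv, sub_mul]
        · change ‖iteratedFDeriv ℝ i (φ N - ψ) x‖ ≤ δ
          rw [iteratedFDeriv_sub_apply ((hφ N).contDiffAt.of_le (by exact_mod_cast le_top))
            (hψ.contDiffAt.of_le (by exact_mod_cast le_top)), ← dist_eq_norm, dist_comm]
          exact (hN i (Finset.mem_range.2 (Nat.lt_succ_of_le hi)) x hx).le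
    _ = ε * (C / (C + 1)) := by
        simp only [δ]
        field_simp
    _ < ε := mul_lt_of_lt_one_right hε ((div_lt_one (by positivity)).2 (lt_add_one C))

end Multiplier

theorem TendstoUniformlyOn.iteratedFDeriv_of_iteratedDeriv {ι 𝕜 F : Type*}
    [NontriviallyNormedField 𝕜] [NormedAddCommGroup F] [NormedSpace 𝕜 F] {l : Filter ι}
    {s : Set 𝕜} {φ : ι → 𝕜 → F} {ψ : 𝕜 → F} {n : ℕ}
    (h : TendstoUniformlyOn (fun N => iteratedDeriv n (φ N)) (iteratedDeriv n ψ) l s) :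
    TendstoUniformlyOn (fun N => iteratedFDeriv 𝕜 n (φ N)) (iteratedFDeriv 𝕜 n ψ) l s := by
  simp_rw [iteratedFDeriv_eq_equiv_comp]
  exact (ContinuousMultilinearMap.piFieldEquiv 𝕜 (Fin n) F).isometry.uniformContinuous
    |>.comp_tendstoUniformlyOn h

theorem Continuous.apply_eq_zero_of_support_subset {X Y : Type*} [TopologicalSpace X]
    [TopologicalSpace Y] [T2Space Y] [Zero Y] {f : X → Y} {s : Set X} {x : X}
    (hf : Continuous f) (hs : Function.support f ⊆ s) (hx : x ∉ interior s) : f x = 0 := by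
  have hzero : Set.EqOn f 0 sᶜ := fun y hy => Function.notMem_support.1 (mt (hs ·) hy)
  exact hzero.closure hf continuous_const (by rwa [closure_compl])

theorem tsupport_iteratedDeriv_subset {𝕜 F : Type*} [NontriviallyNormedField 𝕜]
    [NormedAddCommGroup F] [NormedSpace 𝕜 F] (f : 𝕜 → F) (n : ℕ) :
    tsupport (iteratedDeriv n f) ⊆ tsupport f := by
  induction n with
  | zero => rfl
  | succ n ih => rw [iteratedDeriv_succ]; exact tsupport_deriv_subset.trans ih

theorem iteratedDeriv_eq_zero_of_tsupport_subset_Icc {a b : ℝ} {g : ℝ → ℂ}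
    (hg : ContDiff ℝ ∞ g) (hsupp : tsupport g ⊆ Set.Icc a b) (j : ℕ) :
    iteratedDeriv j g a = 0 ∧ iteratedDeriv j g b = 0 := by
  have hcont : Continuous (iteratedDeriv j g) :=
    hg.continuous_iteratedDeriv j (by exact_mod_cast le_top)
  have hs : Function.support (iteratedDeriv j g) ⊆ Set.Icc a b :=
    (subset_tsupport _).trans ((tsupport_iteratedDeriv_subset g j).trans hsupp)
  constructor <;> exact hcont.apply_eq_zero_of_support_subset hs (by simp)

theorem summable_of_norm_intCast_sq_mul_le {c : ℤ → ℂ} {C : ℝ}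
    (h : ∀ k : ℤ, ‖(k : ℂ) ^ 2 * c k‖ ≤ C) : Summable c := by
  refine .of_norm_bounded_eventually ((Real.summable_one_div_int_pow.2 one_lt_two).mul_left C) ?_
  filter_upwards [eventually_cofinite_ne 0] with k hk
  have hk2 : (0 : ℝ) < (k : ℝ) ^ 2 := by positivity
  rw [← div_eq_mul_one_div, le_div_iff₀ hk2]
  simpa [mul_comm] using h k

section FourierCoeffOn

variable {a b : ℝ} (hab : a < b)
include hab

theorem norm_fourierCoeffOn_le (f : ℝ → ℂ) (n : ℤ) :
    ‖fourierCoeffOn hab f n‖ ≤ (b - a)⁻¹ * ∫ x in a..b, ‖f x‖ := by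
  rw [fourierCoeffOn_eq_integral, norm_smul, one_div,
    Real.norm_of_nonneg (inv_nonneg.2 (sub_nonneg.2 hab.le))]
  gcongr
  refine (intervalIntegral.norm_integral_le_integral_norm hab.le).trans_eq ?_
  simp only [norm_smul, fourier_apply, Circle.norm_coe, one_mul]

theorem fourierCoeffOn_eq_integral_exp (f : ℝ → ℂ) (n : ℤ) :
    fourierCoeffOn hab f n =
      1 / ((b - a : ℝ) : ℂ) * ∫ x in a..b, f x * exp (-(2 * π * I * n * x / (b - a : ℝ))) := by
  rw [fourierCoeffOn_eq_integral, Complex.real_smul]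
  push_cast
  congr 1
  refine intervalIntegral.integral_congr fun x _ => ?_
  rw [smul_eq_mul, fourier_coe_apply, mul_comm]
  push_cast
  ring_nf

theorem fourierCoeffOn_deriv {f f' : ℝ → ℂ} (hf : ∀ x ∈ Set.uIcc a b, HasDerivAt f (f' x) x)
    (hf' : IntervalIntegrable f' MeasureTheory.volume a b) (hfab : f a = f b) (n : ℤ) :
    fourierCoeffOn hab f' n = 2 * π * I * n / (b - a) * fourierCoeffOn hab f n := by
  rcases eq_or_ne n 0 with rfl | hn
  · simp [fourierCoeffOn_eq_integral, intervalIntegral.integral_eq_sub_of_hasDerivAt hf hf', hfab]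
  · have hba : (b : ℂ) - a ≠ 0 := sub_ne_zero.2 (ofReal_injective.ne hab.ne')
    rw [fourierCoeffOn_of_hasDerivAt hab hn hf hf', hfab, sub_self, mul_zero, zero_sub]
    field_simp

variable {g : ℝ → ℂ} (hg : ContDiff ℝ ∞ g) (hsupp : tsupport g ⊆ Set.Icc a b)
include hg hsupp

theorem fourierCoeffOn_iteratedDeriv (j : ℕ) (n : ℤ) :
    fourierCoeffOn hab (iteratedDeriv j g) n =
      (2 * π * I * n / (b - a)) ^ j * fourierCoeffOn hab g n := by
  induction j with
  | zero => simp
  | succ j ih =>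
    have hdiff : Differentiable ℝ (iteratedDeriv j g) :=
      hg.differentiable_iteratedDeriv j (by exact_mod_cast WithTop.coe_lt_top _)
    have hcont : Continuous (deriv (iteratedDeriv j g)) := by
      rw [← iteratedDeriv_succ]
      exact hg.continuous_iteratedDeriv (j + 1) (by exact_mod_cast le_top)
    obtain ⟨ha, hb⟩ := iteratedDeriv_eq_zero_of_tsupport_subset_Icc hg hsupp j
    rw [iteratedDeriv_succ, fourierCoeffOn_deriv hab (fun x _ => (hdiff x).hasDerivAt)
      (hcont.intervalIntegrable _ _) (ha.trans hb.symm), ih]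
    ring

theorem summable_fourierCoeffOn_iteratedDeriv (j : ℕ) :
    Summable (fourierCoeffOn hab (iteratedDeriv j g)) := by
  set w : ℂ := 2 * π * I / (b - a)
  have hw : w ≠ 0 := by
    have : (b : ℂ) - a ≠ 0 := sub_ne_zero.2 (ofReal_injective.ne hab.ne')
    simp [w, this, Real.pi_ne_zero]
  refine summable_of_norm_intCast_sq_mul_le (C := ‖w ^ 2‖⁻¹ *
    ((b - a)⁻¹ * ∫ x in a..b, ‖iteratedDeriv (j + 2) g x‖)) fun k => ?_
  have hrec : fourierCoeffOn hab (iteratedDeriv (j + 2) g) k =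
      w ^ 2 * ((k : ℂ) ^ 2 * fourierCoeffOn hab (iteratedDeriv j g) k) := by
    simp only [fourierCoeffOn_iteratedDeriv hab hg hsupp, w]
    ring
  rw [← inv_mul_cancel_left₀ (pow_ne_zero 2 hw) ((k : ℂ) ^ 2 * _), ← hrec, norm_mul, norm_inv]
  gcongr
  exact norm_fourierCoeffOn_le hab _ k

end FourierCoeffOn

theorem iteratedDeriv_sum_fourier (T : ℝ) (s : Finset ℤ) (c : ℤ → ℂ) (j : ℕ) :
    iteratedDeriv j (fun x : ℝ => ∑ k ∈ s, c k * fourier k (x : AddCircle T)) =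
      fun x : ℝ => ∑ k ∈ s, (2 * π * I * k / T) ^ j * c k * fourier k (x : AddCircle T) := by
  induction j with
  | zero => simp
  | succ j ih =>
    ext x
    rw [iteratedDeriv_succ, ih]
    refine (HasDerivAt.fun_sum fun k _ => (hasDerivAt_fourier T k x).const_mul _).deriv.trans ?_
    simp only [pow_succ]
    exact Finset.sum_congr rfl fun k _ => by ring

theorem contDiff_fourier_coe (T : ℝ) (k : ℤ) :
    ContDiff ℝ ∞ fun x : ℝ => fourier k (x : AddCircle T) := by
  simp_rw [fourier_coe_apply]
  exact ((contDiff_const.mul ofRealCLM.contDiff).div_const _).cexp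

theorem tendstoUniformlyOn_sum_fourierCoeffOn {a b : ℝ} (hab : a < b) {f : ℝ → ℂ}
    (hf : Continuous f) (hfab : f a = f b) (hsum : Summable (fourierCoeffOn hab f)) :
    TendstoUniformlyOn (fun (N : ℕ) (x : ℝ) => ∑ k ∈ Finset.Icc (-(N : ℤ)) N,
      fourierCoeffOn hab f k * fourier k (x : AddCircle (b - a))) f atTop (Set.Ico a b) := by
  have hT : Fact (0 < b - a) := ⟨sub_pos.2 hab⟩
  have hb : a + (b - a) = b := add_sub_cancel a b
  let F : C(AddCircle (b - a), ℂ) :=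
    ⟨AddCircle.liftIco (b - a) a f, AddCircle.liftIco_continuous (by rwa [hb]) hf.continuousOn⟩
  have hcoeff : fourierCoeff F = fourierCoeffOn hab f := by
    ext n
    -- `fourierCoeff_liftIco_eq` is stated on the interval `[a, a + (b - a)]`
    have hcongr : ∀ (b' : ℝ) (h : a < b'), b' = b →
        fourierCoeffOn h f n = fourierCoeffOn hab f n := by
      rintro _ _ rfl; rfl
    exact (fourierCoeff_liftIco_eq f n).trans (hcongr _ _ hb)
  have hsumF := (hasSum_fourier_series_of_summable (hcoeff ▸ hsum)).comp Finset.tendsto_Icc_neg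
  rw [ContinuousMap.tendsto_iff_tendstoUniformly] at hsumF
  refine (hsumF.comp ((↑) : ℝ → AddCircle (b - a))).tendstoUniformlyOn.congr_right
    (fun x hx => ?_) |>.congr (Eventually.of_forall fun N x _ => ?_)
  · simpa [F, hb] using AddCircle.liftIco_coe_apply (f := f) (by rwa [hb])
  · simp [hcoeff]

theorem tendstoUniformlyOn_iteratedDeriv_sum_fourierCoeffOn {a b : ℝ} (hab : a < b)
    {g : ℝ → ℂ} (hg : ContDiff ℝ ∞ g) (hsupp : tsupport g ⊆ Set.Icc a b) (j : ℕ) :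
    TendstoUniformlyOn (fun N : ℕ => iteratedDeriv j fun x : ℝ => ∑ k ∈ Finset.Icc (-(N : ℤ)) N,
      fourierCoeffOn hab g k * fourier k (x : AddCircle (b - a)))
      (iteratedDeriv j g) atTop (Set.Ico a b) := by
  obtain ⟨ha, hb⟩ := iteratedDeriv_eq_zero_of_tsupport_subset_Icc hg hsupp j
  refine (tendstoUniformlyOn_sum_fourierCoeffOn hab
    (hg.continuous_iteratedDeriv j (by exact_mod_cast le_top)) (ha.trans hb.symm)
    (summable_fourierCoeffOn_iteratedDeriv hab hg hsupp j)).congr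
    (Eventually.of_forall fun N x _ => ?_)
  simp only [iteratedDeriv_sum_fourier, fourierCoeffOn_iteratedDeriv hab hg hsupp]
  push_cast
  rfl

/-- **Schwartz convergence of truncated Fourier series** (claim inside Lemma 5.2): if `u` is
smooth with compact support in `(-S/2, S/2)` and `g` is smooth, supported in `[-S/2, S/2]`
and equal to `1` on the support of `u`, then the partial sums of the Fourier series of `g`
multiplied into `u` converge to `u` in the Schwartz topology. -/
theorem fourier_series_tendsto_schwartz (S : ℝ) (hS : 0 < S) (u : 𝓢(ℝ, ℂ))
    (hu : tsupport ⇑u ⊆ Set.Ioo (-(S / 2)) (S / 2))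
    (g : ℝ → ℂ) (hg : ContDiff ℝ ∞ g) (hgsupp : tsupport g ⊆ Set.Icc (-(S / 2)) (S / 2))
    (hg1 : ∀ p ∈ tsupport ⇑u, g p = 1)
    (e : ℤ → 𝓢(ℝ, ℂ))
    (he : ∀ (k : ℤ) (p : ℝ),
      e k p = Complex.exp (2 * (Real.pi : ℂ) * Complex.I * (k : ℂ) * (p : ℂ) / (S : ℂ)) * u p) :
    Tendsto
      (fun N : ℕ => ∑ k ∈ Finset.Icc (-(N : ℤ)) (N : ℤ),
        ((1 / (S : ℂ)) * ∫ p in (-(S / 2))..(S / 2),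
            g p * Complex.exp (-(2 * (Real.pi : ℂ) * Complex.I * (k : ℂ) * (p : ℂ) / (S : ℂ)))) • e k)
      atTop (nhds u) := by
  have hab : -(S / 2) < S / 2 := by linarith
  have hlen : S / 2 - -(S / 2) = S := by ring
  have hfourier : ∀ (k : ℤ) (x : ℝ), fourier k (x : AddCircle (S / 2 - -(S / 2))) =
      Complex.exp (2 * π * I * k * x / S) := by
    intro k x
    rw [fourier_coe_apply, hlen]
  set ψ : ℕ → ℝ → ℂ := fun N x => ∑ k ∈ Finset.Icc (-(N : ℤ)) N,
    fourierCoeffOn hab g k * fourier k (x : AddCircle (S / 2 - -(S / 2)))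
  refine SchwartzMap.tendsto_of_forall_eq_mul (u := u) (φ := ψ) (fun N => ?_) hg (fun N x => ?_)
    (fun x => ?_) (fun i => ?_)
  · exact ContDiff.sum fun k _ => contDiff_const.mul (contDiff_fourier_coe _ k)
  · simp only [sum_apply, smul_apply, smul_eq_mul, he, ψ, hfourier, Finset.sum_mul,
      fourierCoeffOn_eq_integral_exp, hlen]
    exact Finset.sum_congr rfl fun k _ => by ring
  · by_cases hx : x ∈ tsupport u
    · rw [hg1 x hx, one_mul]
    · rw [image_eq_zero_of_notMem_tsupport hx, mul_zero]
  · exact ((tendstoUniformlyOn_iteratedDeriv_sum_fourierCoeffOn hab hg hgsupp i).mono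
      (hu.trans Set.Ioo_subset_Ico_self)).iteratedFDeriv_of_iteratedDeriv
end
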